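/- arXiv:2202.06384 — 8 statements merged into one kernel-verified Lean document; each statement's English description precedes it below -/
import Mathlib

section
/- In an order book, let CP > 0 satisfy imb(CP) ≥ 0. Then vol(CP) = sellVol(CP), and no lower price clears more volume: for every P with 0 < P ≤ CP, vol(P) ≤ vol(CP). -/
variable {ι : Type*}

open Classical in
/-- Total size of buy orders in `B` with price at least `P`. -/
noncomputable def buyVol (B : Finset ι) (price size : ι → ℝ) (P : ℝ) : ℝ :=
  ∑ o ∈ B.filter (fun o => P ≤ price o), size o

open Classical in
/-- Total size of sell orders in `S` with price at most `P`. -/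
noncomputable def sellVol (S : Finset ι) (price size : ι → ℝ) (P : ℝ) : ℝ :=
  ∑ o ∈ S.filter (fun o => price o ≤ P), size o

/-- Cleared volume at candidate clearing price `P`. -/
noncomputable def vol (B S : Finset ι) (price size : ι → ℝ) (P : ℝ) : ℝ :=
  min (buyVol B price size P / P) (sellVol S price size P)

/-- Imbalance at candidate clearing price `P`. -/
noncomputable def imb (B S : Finset ι) (price size : ι → ℝ) (P : ℝ) : ℝ :=
  buyVol B price size P / P - sellVol S price size P

/-- If the imbalance at `CP` is nonnegative then the cleared volume at `CP`
equals the sell volume at `CP`, and no lower price clears more volume. -/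
theorem nonneg_imbalance_no_lower_price_clears_more [DecidableEq ι]
    (B S : Finset ι) (price size : ι → ℝ)
    (hprice : ∀ o ∈ B ∪ S, 0 < price o) (hsize : ∀ o ∈ B ∪ S, 0 < size o)
    (CP : ℝ) (hCP : 0 < CP) (himb : 0 ≤ imb B S price size CP) :
    vol B S price size CP = sellVol S price size CP ∧
    ∀ P : ℝ, 0 < P → P ≤ CP → vol B S price size P ≤ vol B S price size CP := by
  have hmono : ∀ P, P ≤ CP → sellVol S price size P ≤ sellVol S price size CP := by
    intro P hP
    apply Finset.sum_le_sum_of_subset_of_nonneg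
    · intro o ho
      simp only [Finset.mem_filter] at ho ⊢
      exact ⟨ho.1, ho.2.trans hP⟩
    · intro o ho _
      exact (hsize o (Finset.mem_union_right B (Finset.mem_filter.mp ho).1)).le
  have h1 : vol B S price size CP = sellVol S price size CP := by
    unfold vol
    unfold imb at himb
    exact min_eq_right (by linarith)
  refine ⟨h1, fun P hP hPle => ?_⟩
  calc vol B S price size P ≤ sellVol S price size P := min_le_right _ _
    _ ≤ sellVol S price size CP := hmono P hPle
    _ = vol B S price size CP := h1.symm
end

section
/- In an order book, let CP > 0 satisfy imb(CP) ≤ 0. Then vol(CP) = buyVol(CP)/CP, and no higher price clears more volume: for every P with P ≥ CP, vol(P) ≤ vol(CP). -/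
variable {ι : Type*}

/-- If the imbalance at `CP` is nonpositive then the cleared volume at `CP`
equals the buy notional at `CP`, and no higher price clears more volume. -/
theorem nonpos_imbalance_no_higher_price_clears_more [DecidableEq ι]
    (B S : Finset ι) (price size : ι → ℝ)
    (hprice : ∀ o ∈ B ∪ S, 0 < price o) (hsize : ∀ o ∈ B ∪ S, 0 < size o)
    (CP : ℝ) (hCP : 0 < CP) (himb : imb B S price size CP ≤ 0) :
    vol B S price size CP = buyVol B price size CP / CP ∧
    ∀ P : ℝ, CP ≤ P → vol B S price size P ≤ vol B S price size CP := by

  have hb : buyVol B price size CP ≤ buyVol B price size CP := le_refl _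
  have hbnn : ∀ P : ℝ, 0 ≤ buyVol B price size P := by
    intro P
    apply Finset.sum_nonneg
    intro o ho
    exact le_of_lt (hsize o (Finset.mem_union_left S (Finset.mem_filter.mp ho).1))
  have hmono : ∀ P : ℝ, CP ≤ P → buyVol B price size P ≤ buyVol B price size CP := by
    intro P hP
    classical
    apply Finset.sum_le_sum_of_subset_of_nonneg
    · intro o ho
      simp only [Finset.mem_filter] at ho ⊢
      exact ⟨ho.1, le_trans hP ho.2⟩
    · intro o ho _
      exact le_of_lt (hsize o (Finset.mem_union_left S (Finset.mem_filter.mp ho).1))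
  have h1 : vol B S price size CP = buyVol B price size CP / CP := by
    unfold vol
    apply min_eq_left
    unfold imb at himb
    linarith
  refine ⟨h1, ?_⟩
  intro P hP
  have hPpos : 0 < P := lt_of_lt_of_le hCP hP
  have h2 : buyVol B price size P / P ≤ buyVol B price size CP / CP :=
    div_le_div₀ (hbnn CP) (hmono P hP) hCP hP
  rw [h1]
  exact le_trans (min_le_left _ _) h2
end

section
/- In an order book, let CP > 0 satisfy imb(CP) = 0 (the buy notional equals the sell volume at CP). Then CP maximizes the cleared volume over all positive prices: for every P > 0, vol(P) ≤ vol(CP). -/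
variable {ι : Type*}

/-- If the imbalance at `CP` is zero then `CP` maximizes the cleared volume
over all positive prices. -/
theorem zero_imbalance_maximizes_volume [DecidableEq ι]
    (B S : Finset ι) (price size : ι → ℝ)
    (hprice : ∀ o ∈ B ∪ S, 0 < price o) (hsize : ∀ o ∈ B ∪ S, 0 < size o)
    (CP : ℝ) (hCP : 0 < CP) (himb : imb B S price size CP = 0) :
    ∀ P : ℝ, 0 < P → vol B S price size P ≤ vol B S price size CP := by
  classical
  intro P hP
  have heq : buyVol B price size CP / CP = sellVol S price size CP := by
    have := himb; unfold imb at this; linarith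
  have hvolCP : vol B S price size CP = sellVol S price size CP := by
    unfold vol; rw [heq, min_self]
  rcases le_total P CP with h | h
  · -- sellVol monotone
    have hmono : sellVol S price size P ≤ sellVol S price size CP := by
      unfold sellVol
      apply Finset.sum_le_sum_of_subset_of_nonneg
      · intro o ho
        simp only [Finset.mem_filter] at ho ⊢
        exact ⟨ho.1, ho.2.trans h⟩
      · intro o ho _
        exact (hsize o (Finset.mem_union_right B (Finset.mem_filter.mp ho).1)).le
    calc vol B S price size P ≤ sellVol S price size P := min_le_right _ _
      _ ≤ sellVol S price size CP := hmono
      _ = vol B S price size CP := hvolCP.symm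
  · -- buyVol antitone
    have hmono : buyVol B price size P ≤ buyVol B price size CP := by
      unfold buyVol
      apply Finset.sum_le_sum_of_subset_of_nonneg
      · intro o ho
        simp only [Finset.mem_filter] at ho ⊢
        exact ⟨ho.1, h.trans ho.2⟩
      · intro o ho _
        exact (hsize o (Finset.mem_union_left S (Finset.mem_filter.mp ho).1)).le
    have hnn : 0 ≤ buyVol B price size CP := by
      unfold buyVol
      apply Finset.sum_nonneg
      intro o ho
      exact (hsize o (Finset.mem_union_left S (Finset.mem_filter.mp ho).1)).le
    calc vol B S price size P ≤ buyVol B price size P / P := min_le_left _ _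
      _ ≤ buyVol B price size CP / CP := div_le_div₀ hnn hmono hCP h
      _ = vol B S price size CP := by rw [heq, hvolCP]
end

section
/- In an order book, let CP, CP' be prices with 0 < CP < CP' such that no order in B ∪ S has price in the open interval (CP, CP'). If imb(CP) > 0 and vol(CP') < vol(CP), then CP maximizes the cleared volume over all positive prices: for every P > 0, vol(P) ≤ vol(CP). (This is the correctness of the clearing-price verifier's check of the next price increment above a proposed price with positive imbalance, in the strict-volume-drop case.) -/
variable {ι : Type*}

open Classical in
lemma buyVol_nonneg' (B : Finset ι) (price size : ι → ℝ)
    (h : ∀ o ∈ B, 0 ≤ size o) (P : ℝ) : 0 ≤ buyVol B price size P := by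
  unfold buyVol
  exact Finset.sum_nonneg fun o ho => h o (Finset.mem_filter.mp ho).1

open Classical in
lemma buyVol_anti' (B : Finset ι) (price size : ι → ℝ)
    (h : ∀ o ∈ B, 0 ≤ size o) {P Q : ℝ} (hPQ : P ≤ Q) :
    buyVol B price size Q ≤ buyVol B price size P := by
  unfold buyVol
  apply Finset.sum_le_sum_of_subset_of_nonneg
  · intro o ho
    simp only [Finset.mem_filter] at *
    exact ⟨ho.1, hPQ.trans ho.2⟩
  · intro o ho _
    exact h o (Finset.mem_filter.mp ho).1

open Classical in
lemma sellVol_mono' (S : Finset ι) (price size : ι → ℝ)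
    (h : ∀ o ∈ S, 0 ≤ size o) {P Q : ℝ} (hPQ : P ≤ Q) :
    sellVol S price size P ≤ sellVol S price size Q := by
  unfold sellVol
  apply Finset.sum_le_sum_of_subset_of_nonneg
  · intro o ho
    simp only [Finset.mem_filter] at *
    exact ⟨ho.1, ho.2.trans hPQ⟩
  · intro o ho _
    exact h o (Finset.mem_filter.mp ho).1

/-- Verifier check above a proposed price with positive imbalance
(strict-volume-drop case): if `CP < CP'` with no order price strictly between
them, `imb(CP) > 0`, and `vol(CP') < vol(CP)`, then `CP` maximizes the cleared
volume over all positive prices. -/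
theorem verifier_check_above_strict_drop [DecidableEq ι]
    (B S : Finset ι) (price size : ι → ℝ)
    (hprice : ∀ o ∈ B ∪ S, 0 < price o) (hsize : ∀ o ∈ B ∪ S, 0 < size o)
    (CP CP' : ℝ) (hCP : 0 < CP) (hlt : CP < CP')
    (hgap : ∀ o ∈ B ∪ S, price o ∉ Set.Ioo CP CP')
    (himb : 0 < imb B S price size CP)
    (hdrop : vol B S price size CP' < vol B S price size CP) :
    ∀ P : ℝ, 0 < P → vol B S price size P ≤ vol B S price size CP := by
  classical
  have hB : ∀ o ∈ B, 0 ≤ size o := fun o ho =>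
    (hsize o (Finset.mem_union_left _ ho)).le
  have hS : ∀ o ∈ S, 0 ≤ size o := fun o ho =>
    (hsize o (Finset.mem_union_right _ ho)).le
  -- vol CP = sellVol CP since imbalance positive
  have hvolCP : vol B S price size CP = sellVol S price size CP := by
    unfold vol
    unfold imb at himb
    exact min_eq_right (by linarith)
  intro P hP
  rcases le_or_gt P CP with hle | hgt
  · -- P ≤ CP
    have : vol B S price size P ≤ sellVol S price size P := min_le_right _ _
    have h2 := sellVol_mono' S price size hS hle
    rw [hvolCP]; linarith
  · rcases lt_or_ge P CP' with hlt' | hge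
    · -- CP < P < CP' : sellVol P = sellVol CP
      have hsv : sellVol S price size P = sellVol S price size CP := by
        unfold sellVol
        apply Finset.sum_congr _ (fun _ _ => rfl)
        apply Finset.filter_congr
        intro o ho
        constructor
        · intro h
          by_contra hc
          push_neg at hc
          exact hgap o (Finset.mem_union_right _ ho) ⟨hc, lt_of_le_of_lt h hlt'⟩
        · intro h; exact h.trans hgt.le
      calc vol B S price size P ≤ sellVol S price size P := min_le_right _ _
        _ = sellVol S price size CP := hsv
        _ = vol B S price size CP := hvolCP.symm
    · -- P ≥ CP'
      have hCP' : (0:ℝ) < CP' := hCP.trans hlt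
      have hbv := buyVol_anti' B price size hB hge
      have hbn := buyVol_nonneg' B price size hB CP'
      have h1 : buyVol B price size P / P ≤ buyVol B price size CP' / CP' :=
        div_le_div₀ hbn hbv hCP' hge
      -- vol CP' < sellVol CP', so vol CP' = buyVol CP' / CP'
      have hss : sellVol S price size CP ≤ sellVol S price size CP' :=
        sellVol_mono' S price size hS hlt.le
      have h2 : vol B S price size CP' < sellVol S price size CP' := by
        rw [hvolCP] at hdrop; linarith
      have h3 : vol B S price size CP' = buyVol B price size CP' / CP' := by
        unfold vol at h2 ⊢
        rcases min_cases (buyVol B price size CP' / CP') (sellVol S price size CP') with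
          ⟨h, _⟩ | ⟨h, _⟩
        · exact h
        · rw [h] at h2; linarith
      calc vol B S price size P ≤ buyVol B price size P / P := min_le_left _ _
        _ ≤ buyVol B price size CP' / CP' := h1
        _ = vol B S price size CP' := h3.symm
        _ ≤ vol B S price size CP := hdrop.le
end

section
/- In an order book, let CP'', CP be prices with 0 < CP'' < CP such that no order in B ∪ S has price in the open interval (CP'', CP). If imb(CP) < 0 and vol(CP'') < vol(CP), then CP maximizes the cleared volume over all positive prices: for every P > 0, vol(P) ≤ vol(CP). (This is the correctness of the clearing-price verifier's check of the next price increment below a proposed price with negative imbalance, in the strict-volume-drop case.) -/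
variable {ι : Type*}

/-- Verifier check below a proposed price with negative imbalance
(strict-volume-drop case): if `CP'' < CP` with no order price strictly between
them, `imb(CP) < 0`, and `vol(CP'') < vol(CP)`, then `CP` maximizes the
cleared volume over all positive prices. -/
theorem verifier_check_below_strict_drop [DecidableEq ι]
    (B S : Finset ι) (price size : ι → ℝ)
    (hprice : ∀ o ∈ B ∪ S, 0 < price o) (hsize : ∀ o ∈ B ∪ S, 0 < size o)
    (CP'' CP : ℝ) (hCP'' : 0 < CP'') (hlt : CP'' < CP)
    (hgap : ∀ o ∈ B ∪ S, price o ∉ Set.Ioo CP'' CP)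
    (himb : imb B S price size CP < 0)
    (hdrop : vol B S price size CP'' < vol B S price size CP) :
    ∀ P : ℝ, 0 < P → vol B S price size P ≤ vol B S price size CP := by

  classical
  have hsizeB : ∀ o ∈ B, 0 ≤ size o := fun o ho => (hsize o (Finset.mem_union_left _ ho)).le
  have hsizeS : ∀ o ∈ S, 0 ≤ size o := fun o ho => (hsize o (Finset.mem_union_right _ ho)).le
  have hCP : (0:ℝ) < CP := hCP''.trans hlt
  have hbuy_nonneg : ∀ Q : ℝ, 0 ≤ buyVol B price size Q := by
    intro Q
    apply Finset.sum_nonneg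
    intro o ho
    exact hsizeB o (Finset.mem_of_mem_filter _ ho)
  have hbuy_mono : ∀ {P Q : ℝ}, P ≤ Q → buyVol B price size Q ≤ buyVol B price size P := by
    intro P Q h
    apply Finset.sum_le_sum_of_subset_of_nonneg
    · intro o ho
      simp only [Finset.mem_filter] at *
      exact ⟨ho.1, h.trans ho.2⟩
    · intro o ho _
      exact hsizeB o (Finset.mem_filter.mp ho).1
  have hvolCP : vol B S price size CP = buyVol B price size CP / CP := by
    unfold vol
    have h : buyVol B price size CP / CP < sellVol S price size CP := by
      unfold imb at himb; linarith
    exact min_eq_left h.le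
  have hbuy'' : buyVol B price size CP / CP ≤ buyVol B price size CP'' / CP'' :=
    div_le_div₀ (hbuy_nonneg CP'') (hbuy_mono hlt.le) hCP'' hlt.le
  have hsell'' : sellVol S price size CP'' < vol B S price size CP := by
    by_contra h
    push_neg at h
    have hb : vol B S price size CP ≤ buyVol B price size CP'' / CP'' := by
      rw [hvolCP]; exact hbuy''
    have : vol B S price size CP ≤ vol B S price size CP'' := le_min hb h
    linarith
  intro P hP
  rcases le_or_gt CP P with hPC | hPC
  · have h1 : vol B S price size P ≤ buyVol B price size P / P := min_le_left _ _
    have h2 : buyVol B price size P / P ≤ buyVol B price size CP / CP :=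
      div_le_div₀ (hbuy_nonneg CP) (hbuy_mono hPC) hCP hPC
    rw [hvolCP]; linarith
  · have h1 : vol B S price size P ≤ sellVol S price size P := min_le_right _ _
    have h2 : sellVol S price size P ≤ sellVol S price size CP'' := by
      apply Finset.sum_le_sum_of_subset_of_nonneg
      · intro o ho
        simp only [Finset.mem_filter] at *
        refine ⟨ho.1, ?_⟩
        by_contra hc
        push_neg at hc
        exact hgap o (Finset.mem_union_right _ ho.1) ⟨hc, lt_of_le_of_lt ho.2 hPC⟩
      · intro o ho _
        exact hsizeS o (Finset.mem_filter.mp ho).1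
    linarith
end

section
/- In an order book, let CP, CP' be prices with 0 < CP < CP'. If imb(CP) > 0 and |imb(CP')| ≥ imb(CP), then imb(CP') ≤ −imb(CP) < 0; i.e., an absolute imbalance at a higher price that is at least the (positive) imbalance at CP must be a sell-side imbalance. -/
variable {ι : Type*}

/-- An absolute imbalance at a higher price that is at least the (positive)
imbalance at `CP` must be a sell-side imbalance. -/
theorem larger_abs_imbalance_above_is_sell_side [DecidableEq ι]
    (B S : Finset ι) (price size : ι → ℝ)
    (hprice : ∀ o ∈ B ∪ S, 0 < price o) (hsize : ∀ o ∈ B ∪ S, 0 < size o)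
    (CP CP' : ℝ) (hCP : 0 < CP) (hlt : CP < CP')
    (himb : 0 < imb B S price size CP)
    (habs : imb B S price size CP ≤ |imb B S price size CP'|) :
    imb B S price size CP' ≤ -imb B S price size CP ∧
    -imb B S price size CP < 0 := by
  classical
  have hCP' : 0 < CP' := hCP.trans hlt
  have hsB : ∀ o ∈ B, 0 ≤ size o := fun o ho =>
    (hsize o (Finset.mem_union_left _ ho)).le
  have hsS : ∀ o ∈ S, 0 ≤ size o := fun o ho =>
    (hsize o (Finset.mem_union_right _ ho)).le
  have hbuy : buyVol B price size CP' ≤ buyVol B price size CP := by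
    unfold buyVol
    apply Finset.sum_le_sum_of_subset_of_nonneg
    · intro o ho
      simp only [Finset.mem_filter] at ho ⊢
      exact ⟨ho.1, hlt.le.trans ho.2⟩
    · exact fun o ho _ => hsB o (Finset.mem_filter.mp ho).1
  have hsell : sellVol S price size CP ≤ sellVol S price size CP' := by
    unfold sellVol
    apply Finset.sum_le_sum_of_subset_of_nonneg
    · intro o ho
      simp only [Finset.mem_filter] at ho ⊢
      exact ⟨ho.1, ho.2.trans hlt.le⟩
    · exact fun o ho _ => hsS o (Finset.mem_filter.mp ho).1
  have hsell0 : 0 ≤ sellVol S price size CP :=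
    Finset.sum_nonneg fun o ho => hsS o (Finset.mem_filter.mp ho).1
  have hbuy0 : 0 < buyVol B price size CP := by
    have h : 0 < buyVol B price size CP / CP := by
      have := himb
      unfold imb at this
      linarith
    rw [div_pos_iff] at h
    rcases h with ⟨h1, _⟩ | ⟨_, h2⟩
    · exact h1
    · linarith
  have hbuy0' : 0 ≤ buyVol B price size CP' :=
    Finset.sum_nonneg fun o ho => hsB o (Finset.mem_filter.mp ho).1
  have hdiv : buyVol B price size CP' / CP' < buyVol B price size CP / CP := by
    calc buyVol B price size CP' / CP' ≤ buyVol B price size CP / CP' := by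
          gcongr
      _ < buyVol B price size CP / CP := by
          exact div_lt_div_of_pos_left hbuy0 hCP hlt
  have hkey : imb B S price size CP' < imb B S price size CP := by
    unfold imb; linarith
  have h1 : imb B S price size CP' ≤ -imb B S price size CP := by
    rcases abs_cases (imb B S price size CP') with ⟨he, _⟩ | ⟨he, _⟩
    · rw [he] at habs; linarith
    · rw [he] at habs; linarith
  exact ⟨h1, by linarith⟩
end

section
/- In an order book, let CP, CP' be prices with 0 < CP < CP' such that no order in B ∪ S has price in the open interval (CP, CP'). If imb(CP) > 0, vol(CP') = vol(CP), and |imb(CP')| ≥ imb(CP), then CP maximizes the cleared volume over all positive prices: for every P > 0, vol(P) ≤ vol(CP). (This is the correctness of the clearing-price verifier's tie-breaking check: equal cleared volume at the next price above together with an absolute imbalance at least as large certifies the proposed price.) -/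
variable {ι : Type*}

/-- Verifier tie-breaking check above a proposed price with positive
imbalance: equal cleared volume at the next price above together with an
absolute imbalance at least as large certifies the proposed price. -/
theorem verifier_check_above_tie_break [DecidableEq ι]
    (B S : Finset ι) (price size : ι → ℝ)
    (hprice : ∀ o ∈ B ∪ S, 0 < price o) (hsize : ∀ o ∈ B ∪ S, 0 < size o)
    (CP CP' : ℝ) (hCP : 0 < CP) (hlt : CP < CP')
    (hgap : ∀ o ∈ B ∪ S, price o ∉ Set.Ioo CP CP')
    (himb : 0 < imb B S price size CP)
    (hvol : vol B S price size CP' = vol B S price size CP)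
    (habs : imb B S price size CP ≤ |imb B S price size CP'|) :
    ∀ P : ℝ, 0 < P → vol B S price size P ≤ vol B S price size CP := by

  classical
  intro P hP
  -- basic facts
  have hbnn : ∀ Q : ℝ, 0 ≤ buyVol B price size Q := by
    intro Q
    apply Finset.sum_nonneg
    intro o ho
    exact le_of_lt (hsize o (Finset.mem_union_left S (Finset.mem_filter.mp ho).1))
  have hsnn : ∀ Q : ℝ, 0 ≤ sellVol S price size Q := by
    intro Q
    apply Finset.sum_nonneg
    intro o ho
    exact le_of_lt (hsize o (Finset.mem_union_right B (Finset.mem_filter.mp ho).1))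
  have hbanti : ∀ Q R : ℝ, Q ≤ R → buyVol B price size R ≤ buyVol B price size Q := by
    intro Q R h
    apply Finset.sum_le_sum_of_subset_of_nonneg
    · intro o ho
      simp only [Finset.mem_filter] at ho ⊢
      exact ⟨ho.1, h.trans ho.2⟩
    · intro o ho _
      exact le_of_lt (hsize o (Finset.mem_union_left S (Finset.mem_filter.mp ho).1))
  have hsmono : ∀ Q R : ℝ, Q ≤ R → sellVol S price size Q ≤ sellVol S price size R := by
    intro Q R h
    apply Finset.sum_le_sum_of_subset_of_nonneg
    · intro o ho
      simp only [Finset.mem_filter] at ho ⊢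
      exact ⟨ho.1, ho.2.trans h⟩
    · intro o ho _
      exact le_of_lt (hsize o (Finset.mem_union_right B (Finset.mem_filter.mp ho).1))
  have himb1 : sellVol S price size CP < buyVol B price size CP / CP := by
    unfold imb at himb; linarith
  have hvolCP : vol B S price size CP = sellVol S price size CP := by
    unfold vol; rw [min_eq_right (le_of_lt himb1)]
  rcases le_or_gt P CP with hle | hgt
  · calc vol B S price size P ≤ sellVol S price size P := min_le_right _ _
      _ ≤ sellVol S price size CP := hsmono _ _ hle
      _ = vol B S price size CP := hvolCP.symm
  · rcases lt_or_ge P CP' with hlt2 | hge2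
    · -- CP < P < CP' : sellVol P = sellVol CP
      have hseq : sellVol S price size P = sellVol S price size CP := by
        unfold sellVol
        apply Finset.sum_congr _ (fun _ _ => rfl)
        ext o
        simp only [Finset.mem_filter]
        constructor
        · rintro ⟨ho, h1⟩
          refine ⟨ho, ?_⟩
          by_contra hcon
          exact hgap o (Finset.mem_union_right B ho)
            ⟨lt_of_not_ge hcon, lt_of_le_of_lt h1 hlt2⟩
        · rintro ⟨ho, h1⟩
          exact ⟨ho, h1.trans (le_of_lt hgt)⟩
      calc vol B S price size P ≤ sellVol S price size P := min_le_right _ _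
        _ = sellVol S price size CP := hseq
        _ = vol B S price size CP := hvolCP.symm
    · -- P ≥ CP'
      have hCP' : (0:ℝ) < CP' := hCP.trans hlt
      have himb' : imb B S price size CP' ≤ 0 := by
        by_contra hcon
        push_neg at hcon
        rw [abs_of_pos hcon] at habs
        unfold imb at habs
        have hsle : sellVol S price size CP ≤ sellVol S price size CP' :=
          hsmono _ _ (le_of_lt hlt)
        have h1 : buyVol B price size CP / CP ≤ buyVol B price size CP' / CP' := by
          linarith
        have h2 : buyVol B price size CP' / CP' ≤ buyVol B price size CP / CP' := by
          gcongr
          exact hbanti _ _ (le_of_lt hlt)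
        have hbpos : 0 < buyVol B price size CP := by
          by_contra hb
          push_neg at hb
          have : buyVol B price size CP / CP ≤ 0 := div_nonpos_of_nonpos_of_nonneg hb hCP.le
          have := hsnn CP
          linarith
        have h3 : buyVol B price size CP / CP' < buyVol B price size CP / CP :=
          div_lt_div_of_pos_left hbpos hCP hlt
        linarith
      have hkey : buyVol B price size CP' / CP' = vol B S price size CP := by
        rw [← hvol]
        unfold vol
        rw [min_eq_left]
        unfold imb at himb'
        linarith
      calc vol B S price size P ≤ buyVol B price size P / P := min_le_left _ _
        _ ≤ buyVol B price size CP' / P := by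
            gcongr
            exact hbanti _ _ hge2
        _ ≤ buyVol B price size CP' / CP' :=
            div_le_div_of_nonneg_left (hbnn _) hCP' hge2
        _ = vol B S price size CP := hkey
end

section
/- In an order book in which B ∪ S is nonempty, a volume-maximizing clearing price exists and can be chosen among the order prices: there exists an order o* ∈ B ∪ S such that, setting CP = price(o*), one has vol(P) ≤ vol(CP) for every P > 0. -/
variable {ι : Type*}

/-- In a nonempty order book, a volume-maximizing clearing price exists and
can be chosen among the order prices. -/
theorem exists_volume_maximizing_order_price [DecidableEq ι]
    (B S : Finset ι) (price size : ι → ℝ)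
    (hprice : ∀ o ∈ B ∪ S, 0 < price o) (hsize : ∀ o ∈ B ∪ S, 0 < size o)
    (hne : (B ∪ S).Nonempty) :
    ∃ o ∈ B ∪ S, ∀ P : ℝ, 0 < P →
      vol B S price size P ≤ vol B S price size (price o) := by

  classical
  obtain ⟨o, ho, hmax⟩ := (B ∪ S).exists_max_image
    (fun o => vol B S price size (price o)) hne
  refine ⟨o, ho, ?_⟩
  have hbuy_nonneg : ∀ Q : ℝ, 0 ≤ buyVol B price size Q := by
    intro Q
    refine Finset.sum_nonneg fun x hx => ?_
    exact (hsize x (Finset.mem_union_left _ (Finset.mem_filter.mp hx).1)).le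
  have hsell_nonneg : ∀ Q : ℝ, 0 ≤ sellVol S price size Q := by
    intro Q
    refine Finset.sum_nonneg fun x hx => ?_
    exact (hsize x (Finset.mem_union_right _ (Finset.mem_filter.mp hx).1)).le
  have hvol_nonneg : 0 ≤ vol B S price size (price o) := by
    have hp := hprice o ho
    exact le_min (div_nonneg (hbuy_nonneg _) hp.le) (hsell_nonneg _)
  intro P hP
  by_cases hSne : (S.filter (fun s => price s ≤ P)).Nonempty
  · obtain ⟨q, hq, hqmax⟩ := Finset.exists_max_image _ price hSne
    obtain ⟨hqS, hqP⟩ := Finset.mem_filter.mp hq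
    have hq0 : 0 < price q := hprice q (Finset.mem_union_right _ hqS)
    have hsell_eq : sellVol S price size (price q) = sellVol S price size P := by
      unfold sellVol
      congr 1
      apply Finset.filter_congr
      intro s hs
      constructor
      · intro h; exact h.trans hqP
      · intro h; exact hqmax s (Finset.mem_filter.mpr ⟨hs, h⟩)
    have hbuy_le : buyVol B price size P ≤ buyVol B price size (price q) := by
      unfold buyVol
      refine Finset.sum_le_sum_of_subset_of_nonneg ?_ ?_
      · intro b hb
        obtain ⟨hbB, hPb⟩ := Finset.mem_filter.mp hb
        exact Finset.mem_filter.mpr ⟨hbB, hqP.trans hPb⟩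
      · intro x hx _
        exact (hsize x (Finset.mem_union_left _ (Finset.mem_filter.mp hx).1)).le
    have hdiv : buyVol B price size P / P ≤ buyVol B price size (price q) / price q :=
      div_le_div₀ (hbuy_nonneg _) hbuy_le hq0 hqP
    have hstep : vol B S price size P ≤ vol B S price size (price q) := by
      unfold vol; rw [hsell_eq]; exact min_le_min hdiv le_rfl
    exact hstep.trans (hmax q (Finset.mem_union_right _ hqS))
  · have hsell0 : sellVol S price size P = 0 := by
      unfold sellVol
      rw [Finset.not_nonempty_iff_eq_empty.mp hSne, Finset.sum_empty]
    have : vol B S price size P ≤ 0 := by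
      unfold vol; rw [hsell0]; exact min_le_right _ _
    exact this.trans hvol_nonneg
end
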